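/- The conclusion of the previous lemma fails without compactness: in $\mathbb{R}^2$, let $D_i = \{(x, e^{-x}) : x \in [0,i]\} \cup \{(x,0) : x \in [0,i]\} \cup \{(i,y) : y \in [0, e^{-i}]\}$ and $C_i = \bigcup_{j \ge i} D_j$. Then each $C_i$ is path-connected, but the limit set $\{(x,e^{-x}) : x \ge 0\} \cup \{(x,0) : x \ge 0\}$ is not connected. -/
import Mathlib


open Filter

private lemma setOf_eq_image {α β : Type*} (f : α → β) (s : Set α) :
    {p | ∃ x ∈ s, p = f x} = f '' s := by
  ext p; simp [Set.mem_image, eq_comm]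

/-- Remark 4.5: the counterexample showing Lemma 4.4 fails without compactness. -/
theorem limit_set_counterexample
    (D : ℕ → Set (ℝ × ℝ))
    (hD : ∀ i : ℕ, D i =
      {p : ℝ × ℝ | ∃ x ∈ Set.Icc (0:ℝ) (i:ℝ), p = (x, Real.exp (-x))} ∪
      {p : ℝ × ℝ | ∃ x ∈ Set.Icc (0:ℝ) (i:ℝ), p = (x, 0)} ∪
      {p : ℝ × ℝ | ∃ y ∈ Set.Icc (0:ℝ) (Real.exp (-(i:ℝ))), p = ((i:ℝ), y)})
    (C : ℕ → Set (ℝ × ℝ))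
    (hC : ∀ i : ℕ, C i = ⋃ j ∈ {j : ℕ | i ≤ j}, D j)
    (L : Set (ℝ × ℝ))
    (hL : L = {p : ℝ × ℝ | ∃ x : ℝ, 0 ≤ x ∧ p = (x, Real.exp (-x))} ∪
              {p : ℝ × ℝ | ∃ x : ℝ, 0 ≤ x ∧ p = (x, 0)}) :
    (∀ i : ℕ, IsPathConnected (C i)) ∧
    L = {p : ℝ × ℝ | ∃ (n : ℕ → ℕ) (x : ℕ → ℝ × ℝ),
          (∀ i, x i ∈ C (n i)) ∧ Tendsto n atTop atTop ∧
          Tendsto x atTop (nhds p)} ∧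
    ¬ IsConnected L := by
  -- each D j is path connected
  have hDj : ∀ j : ℕ, IsPathConnected (D j) := by
    intro j
    have h0j : ((0:ℝ) : ℝ) ∈ Set.Icc (0:ℝ) (j:ℝ) := ⟨le_refl _, j.cast_nonneg⟩
    have hA : IsPathConnected ((fun x : ℝ => (x, Real.exp (-x))) '' Set.Icc 0 (j:ℝ)) :=
      ((convex_Icc (0:ℝ) (j:ℝ)).isPathConnected ⟨0, h0j⟩).image (by fun_prop)
    have hB : IsPathConnected ((fun x : ℝ => (x, (0:ℝ))) '' Set.Icc 0 (j:ℝ)) :=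
      ((convex_Icc (0:ℝ) (j:ℝ)).isPathConnected ⟨0, h0j⟩).image (by fun_prop)
    have hV : IsPathConnected ((fun y : ℝ => ((j:ℝ), y)) '' Set.Icc 0 (Real.exp (-(j:ℝ)))) :=
      ((convex_Icc (0:ℝ) _).isPathConnected
        ⟨0, le_refl _, (Real.exp_pos _).le⟩).image (by fun_prop)
    have hAV : IsPathConnected
        ((fun x : ℝ => (x, Real.exp (-x))) '' Set.Icc 0 (j:ℝ) ∪
         (fun y : ℝ => ((j:ℝ), y)) '' Set.Icc 0 (Real.exp (-(j:ℝ)))) :=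
      hA.union hV ⟨((j:ℝ), Real.exp (-(j:ℝ))),
        ⟨(j:ℝ), ⟨j.cast_nonneg, le_refl _⟩, rfl⟩,
        ⟨Real.exp (-(j:ℝ)), ⟨(Real.exp_pos _).le, le_refl _⟩, rfl⟩⟩
    have hAVB := hAV.union hB
      ⟨((j:ℝ), (0:ℝ)),
        Or.inr ⟨0, ⟨le_refl _, (Real.exp_pos _).le⟩, rfl⟩,
        ⟨(j:ℝ), ⟨j.cast_nonneg, le_refl _⟩, rfl⟩⟩
    have hDeq : D j =
        ((fun x : ℝ => (x, Real.exp (-x))) '' Set.Icc 0 (j:ℝ) ∪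
         (fun y : ℝ => ((j:ℝ), y)) '' Set.Icc 0 (Real.exp (-(j:ℝ)))) ∪
        (fun x : ℝ => (x, (0:ℝ))) '' Set.Icc 0 (j:ℝ) := by
      rw [hD j, setOf_eq_image, setOf_eq_image, setOf_eq_image, Set.union_right_comm]
    rw [hDeq]
    exact hAVB
  have hbase : ∀ j : ℕ, ((0:ℝ), (0:ℝ)) ∈ D j := by
    intro j
    rw [hD j]
    exact Or.inl (Or.inr ⟨0, ⟨le_refl _, j.cast_nonneg⟩, rfl⟩)
  refine ⟨?_, ?_, ?_⟩
  · -- path connectedness of C i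
    intro i
    refine ⟨((0:ℝ), (0:ℝ)), ?_, ?_⟩
    · rw [hC]
      exact Set.mem_biUnion (le_refl i) (hbase i)
    · intro p hp
      rw [hC] at hp
      simp only [Set.mem_iUnion, Set.mem_setOf_eq, exists_prop] at hp
      obtain ⟨j, hj, hpj⟩ := hp
      exact ((hDj j).joinedIn _ (hbase j) _ hpj).mono
        (by rw [hC]; exact Set.subset_biUnion_of_mem hj)
  · -- L equals the limit set
    -- key facts about points of C j
    have hCfact : ∀ (j : ℕ) (q : ℝ × ℝ), q ∈ C j →
        0 ≤ q.1 ∧ 0 ≤ q.2 * (Real.exp (-q.1) - q.2) ∧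
        q.2 * (Real.exp (-q.1) - q.2) ≤ Real.exp (-(j:ℝ)) := by
      intro j q hq
      rw [hC] at hq
      simp only [Set.mem_iUnion, Set.mem_setOf_eq, exists_prop] at hq
      obtain ⟨k, hk, hqk⟩ := hq
      have hjk : Real.exp (-(k:ℝ)) ≤ Real.exp (-(j:ℝ)) :=
        Real.exp_le_exp.2 (neg_le_neg (by exact_mod_cast hk))
      have hk1 : Real.exp (-(k:ℝ)) ≤ 1 :=
        Real.exp_le_one_iff.2 (neg_nonpos.2 k.cast_nonneg)
      rw [hD k] at hqk
      rcases hqk with (⟨x, hx, rfl⟩ | ⟨x, hx, rfl⟩) | ⟨y, hy, rfl⟩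
      · exact ⟨hx.1, by simp, by simp [(Real.exp_pos (-(j:ℝ))).le]⟩
      · exact ⟨hx.1, by simp, by simp [(Real.exp_pos (-(j:ℝ))).le]⟩
      · refine ⟨k.cast_nonneg, mul_nonneg hy.1 (sub_nonneg.2 hy.2), ?_⟩
        have h1 : y * (Real.exp (-(k:ℝ)) - y) ≤ Real.exp (-(k:ℝ)) * Real.exp (-(k:ℝ)) :=
          mul_le_mul hy.2 (by linarith [hy.1]) (sub_nonneg.2 hy.2) (Real.exp_pos _).le
        nlinarith [Real.exp_pos (-(k:ℝ))]
    ext p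
    simp only [Set.mem_setOf_eq]
    constructor
    · intro hp
      refine ⟨id, fun _ => p, ?_, tendsto_id, tendsto_const_nhds⟩
      intro i
      rw [hL] at hp
      rw [hC]
      rcases hp with ⟨x, hx0, rfl⟩ | ⟨x, hx0, rfl⟩
      · refine Set.mem_biUnion (show i ≤ max i ⌈x⌉₊ from le_max_left _ _) ?_
        rw [hD]
        refine Or.inl (Or.inl ⟨x, ⟨hx0, ?_⟩, rfl⟩)
        exact le_trans (Nat.le_ceil x) (by exact_mod_cast le_max_right i ⌈x⌉₊)
      · refine Set.mem_biUnion (show i ≤ max i ⌈x⌉₊ from le_max_left _ _) ?_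
        rw [hD]
        refine Or.inl (Or.inr ⟨x, ⟨hx0, ?_⟩, rfl⟩)
        exact le_trans (Nat.le_ceil x) (by exact_mod_cast le_max_right i ⌈x⌉₊)
    · rintro ⟨n, x, hxC, hn, hx⟩
      -- first coordinate limit is nonnegative
      have hx1 : Tendsto (fun i => (x i).1) atTop (nhds p.1) :=
        (continuous_fst.tendsto p).comp hx
      have hp1 : 0 ≤ p.1 :=
        ge_of_tendsto' hx1 (fun i => (hCfact (n i) (x i) (hxC i)).1)
      -- f tends to 0
      have hf : Continuous fun q : ℝ × ℝ => q.2 * (Real.exp (-q.1) - q.2) := by fun_prop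
      have hupper : Tendsto (fun i => Real.exp (-(n i : ℝ))) atTop (nhds 0) :=
        Real.tendsto_exp_atBot.comp
          ((tendsto_neg_atTop_atBot).comp (tendsto_natCast_atTop_atTop.comp hn))
      have hfx : Tendsto (fun i => (x i).2 * (Real.exp (-(x i).1) - (x i).2)) atTop (nhds 0) :=
        tendsto_of_tendsto_of_tendsto_of_le_of_le tendsto_const_nhds hupper
          (fun i => (hCfact (n i) (x i) (hxC i)).2.1)
          (fun i => (hCfact (n i) (x i) (hxC i)).2.2)
      have hfp : p.2 * (Real.exp (-p.1) - p.2) = 0 :=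
        tendsto_nhds_unique ((hf.tendsto p).comp hx) hfx
      rw [hL]
      rcases mul_eq_zero.1 hfp with h2 | h2
      · exact Or.inr ⟨p.1, hp1, by rw [← h2]⟩
      · refine Or.inl ⟨p.1, hp1, ?_⟩
        have : p.2 = Real.exp (-p.1) := by linarith [sub_eq_zero.1 h2]
        rw [← this]
  · -- L is not connected
    rintro ⟨hne, hconn⟩
    have hU : IsOpen {q : ℝ × ℝ | q.2 < Real.exp (-q.1) / 2} :=
      isOpen_lt (by fun_prop) (by fun_prop)
    have hV : IsOpen {q : ℝ × ℝ | Real.exp (-q.1) / 2 < q.2} :=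
      isOpen_lt (by fun_prop) (by fun_prop)
    have hsub : L ⊆ {q : ℝ × ℝ | q.2 < Real.exp (-q.1) / 2} ∪
        {q : ℝ × ℝ | Real.exp (-q.1) / 2 < q.2} := by
      rw [hL]
      rintro p (⟨x, hx0, rfl⟩ | ⟨x, hx0, rfl⟩)
      · exact Or.inr (by simp only [Set.mem_setOf_eq]; linarith [Real.exp_pos (-x)])
      · exact Or.inl (by simp only [Set.mem_setOf_eq]; linarith [Real.exp_pos (-x)])
    have hLU : (L ∩ {q : ℝ × ℝ | q.2 < Real.exp (-q.1) / 2}).Nonempty := by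
      refine ⟨((0:ℝ), (0:ℝ)), ?_, ?_⟩
      · rw [hL]; exact Or.inr ⟨0, le_refl _, rfl⟩
      · simp only [Set.mem_setOf_eq, neg_zero, Real.exp_zero]
        norm_num
    have hLV : (L ∩ {q : ℝ × ℝ | Real.exp (-q.1) / 2 < q.2}).Nonempty := by
      refine ⟨((0:ℝ), Real.exp (-(0:ℝ))), ?_, ?_⟩
      · rw [hL]; exact Or.inl ⟨0, le_refl _, rfl⟩
      · simp only [Set.mem_setOf_eq, neg_zero, Real.exp_zero]
        norm_num
    obtain ⟨q, _, hq1, hq2⟩ := hconn _ _ hU hV hsub hLU hLV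
    simp only [Set.mem_setOf_eq] at hq1 hq2
    linarith
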